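/- Let Ω ⊂ ℝ^d be bounded and x₀ ∈ ℝ^d, ρ ∈ (0,1]. Suppose h belongs to the set of admissible outward vectors O_ρ(x₀) = { h : |h| ≤ ρ and (D_{3ρ}(x₀) \ Ω) + th ⊂ ℝ^d \ Ω for all t ∈ [0,1] }. Let φ : ℝ^d → [0,1] with φ ≡ 1 on D_ρ(x₀) and supp φ ⊂ D_{2ρ}(x₀), and define T_h v = φ v_h + (1−φ)v where v_h(x) = v(x+h) and v is extended by zero outside Ω. If v vanishes a.e. on ℝ^d \ closure(Ω), then T_h v vanishes a.e. on ℝ^d \ closure(Ω). -/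
import Mathlib

theorem localized_translation_preserves_support {d : ℕ}
    (Ω : Set (EuclideanSpace ℝ (Fin d))) (hΩb : Bornology.IsBounded Ω)
    (x₀ : EuclideanSpace ℝ (Fin d)) (ρ : ℝ) (hρ : 0 < ρ) (hρ1 : ρ ≤ 1)
    (h : EuclideanSpace ℝ (Fin d)) (hh : ‖h‖ ≤ ρ)
    -- `h` is an admissible outward vector in `O_ρ(x₀)`
    (hadm : ∀ x ∈ Metric.ball x₀ (3 * ρ) \ Ω, ∀ t : ℝ, 0 ≤ t → t ≤ 1 →
      x + t • h ∉ Ω)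
    (φ : EuclideanSpace ℝ (Fin d) → ℝ) (hφ : ∀ x, φ x ∈ Set.Icc (0 : ℝ) 1)
    (hφ1 : ∀ x ∈ Metric.ball x₀ ρ, φ x = 1)
    (hφsupp : ∀ x ∉ Metric.ball x₀ (2 * ρ), φ x = 0)
    (v : EuclideanSpace ℝ (Fin d) → ℝ)
    -- `v` (extended by zero outside `Ω`) vanishes outside `Ω`
    (hv : ∀ x ∉ Ω, v x = 0) :
    ∀ x ∉ Ω, φ x * v (x + h) + (1 - φ x) * v x = 0 := by
  intro x hx
  rw [hv x hx]
  by_cases hb : x ∈ Metric.ball x₀ (3 * ρ)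
  · have := hadm x ⟨hb, hx⟩ 1 zero_le_one le_rfl
    rw [one_smul] at this
    rw [hv _ this]; ring
  · have : x ∉ Metric.ball x₀ (2 * ρ) := fun hc => hb (Metric.ball_subset_ball (by linarith) hc)
    rw [hφsupp x this]; ring
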